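/- Finite spectral decomposition of norm-continuous Banach-space representations of compact abelian groups: let G be a compact abelian topological group, E a complex Banach space, and ρ a norm-continuous representation of G on E. Then there exist finitely many pairwise distinct continuous characters χ₁, …, χ_n : G → 𝕋 and nonzero idempotent bounded operators e₁, …, e_n on E with e_i e_j = 0 for i ≠ j and e₁ + ⋯ + e_n = 1, such that ρ(g) = χ₁(g) e₁ + ⋯ + χ_n(g) e_n for every g ∈ G. -/

import Mathlib

/-!
For a continuous character `χ` of `G` let `P χ = ∫ χ(g)⁻¹ • ρ(g) dg` (normalized Haar measure).
Invariance of the measure gives `ρ(g) * P χ = χ(g) • P χ`, and orthogonality of characters then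
makes the `P χ` orthogonal idempotents. Distinct nonzero orthogonal idempotents are at distance
at least `1` from each other, while all `P χ` lie in the closed convex hull of the compact set
`𝕋 • ρ(G)`; hence only finitely many of them are nonzero. Their sum `P` is `1`: otherwise, in the
closed commutative subalgebra generated by `ρ(G)`, Gelfand theory gives a character `φ` with
`φ (1 - P) = 1`, and `φ ∘ ρ` is a character `χ₀` of `G` with `φ (P χ₀) = 1`; so `P χ₀` is one of
the summands of `P` and `φ P = 1`, a contradiction. Finally `ρ(g) = ρ(g) * P = ∑ χ(g) • P χ`.
-/

open MeasureTheory

theorem MonoidHom.norm_apply_eq_one_of_bddAbove {G 𝕜 : Type*} [Group G] [NormedDivisionRing 𝕜]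
    (f : G →* 𝕜) (hf : BddAbove (Set.range fun g => ‖f g‖)) (g : G) : ‖f g‖ = 1 := by
  obtain ⟨C, hC⟩ := hf
  have hle : ∀ g, ‖f g‖ ≤ 1 := fun g => by
    by_contra! hlt
    obtain ⟨n, hn⟩ := pow_unbounded_of_one_lt C hlt
    have := hC ⟨g ^ n, rfl⟩
    simp only [map_pow, norm_pow] at this
    linarith
  have hmul : ‖f g‖ * ‖f g⁻¹‖ = 1 := by
    rw [← norm_mul, ← map_mul, mul_inv_cancel, map_one, norm_one]
  nlinarith [hle g, hle g⁻¹, norm_nonneg (f g), norm_nonneg (f g⁻¹)]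

noncomputable def ContinuousMonoidHom.toCircle {G : Type*} [Group G] [TopologicalSpace G]
    [CompactSpace G] (f : G →ₜ* ℂ) : G →ₜ* Circle where
  toFun g := ⟨f g, mem_sphere_zero_iff_norm.2 <| f.toMonoidHom.norm_apply_eq_one_of_bddAbove
    (isCompact_range (map_continuous f).norm).bddAbove g⟩
  map_one' := Circle.ext (map_one f)
  map_mul' g h := Circle.ext (map_mul f g h)
  continuous_toFun := (map_continuous f).subtype_mk _

@[simp]
theorem ContinuousMonoidHom.coe_toCircle_apply {G : Type*} [Group G] [TopologicalSpace G]
    [CompactSpace G] (f : G →ₜ* ℂ) (g : G) : (f.toCircle g : ℂ) = f g := rfl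

open Classical in
theorem MonoidHom.integral_coe_circle_eq_ite {G : Type*} [Group G] [MeasurableSpace G]
    [MeasurableMul G] (μ : Measure G) [μ.IsMulLeftInvariant] [IsProbabilityMeasure μ]
    (χ : G →* Circle) : ∫ g, (χ g : ℂ) ∂μ = if χ = 1 then 1 else 0 := by
  split_ifs with hχ
  · simp [hχ]
  obtain ⟨g₀, hg₀⟩ : ∃ g₀, χ g₀ ≠ 1 := by
    by_contra! h
    exact hχ (MonoidHom.ext h)
  have hinv := integral_mul_left_eq_self (μ := μ) (fun g => (χ g : ℂ)) g₀
  simp only [map_mul, Circle.coe_mul, integral_const_mul] at hinv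
  have hzero : ((χ g₀ : ℂ) - 1) * ∫ g, (χ g : ℂ) ∂μ = 0 := by
    rw [sub_mul, hinv, one_mul, sub_self]
  exact (mul_eq_zero.1 hzero).resolve_left (sub_ne_zero.2 fun h => hg₀ (Circle.coe_injective h))

open Classical in
theorem ContinuousMonoidHom.integral_inv_mul_eq_ite {G : Type*} [Group G] [TopologicalSpace G]
    [MeasurableSpace G] [MeasurableMul G] (μ : Measure G) [μ.IsMulLeftInvariant]
    [IsProbabilityMeasure μ] (χ ψ : G →ₜ* Circle) :
    ∫ g, (((χ g)⁻¹ : Circle) : ℂ) * ψ g ∂μ = if χ = ψ then 1 else 0 := by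
  have := (χ.toMonoidHom⁻¹ * ψ.toMonoidHom).integral_coe_circle_eq_ite μ
  simp only [inv_mul_eq_one, ContinuousMonoidHom.toMonoidHom_injective.eq_iff] at this
  simpa using this

theorem IsIdempotentElem.one_le_norm_sub {R : Type*} [NormedRing R] {p q : R}
    (hp : IsIdempotentElem p) (hp0 : p ≠ 0) (hqp : q * p = 0) : 1 ≤ ‖p - q‖ := by
  have hsub : (p - q) * p = p := by rw [sub_mul, hp.eq, hqp, sub_zero]
  have hle : ‖p‖ ≤ ‖p - q‖ * ‖p‖ := by
    conv_lhs => rw [← hsub]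
    exact norm_mul_le (p - q) p
  exact le_of_mul_le_mul_right (by simpa using hle) (norm_pos_iff.2 hp0)

theorem TotallyBounded.finite_of_pairwise_le_dist {X : Type*} [PseudoMetricSpace X] {s t : Set X}
    {ε : ℝ} (hs : TotallyBounded s) (hε : 0 < ε) (hts : t ⊆ s)
    (ht : t.Pairwise fun x y => ε ≤ dist x y) : t.Finite := by
  obtain ⟨c, hc, hcover⟩ := Metric.totallyBounded_iff.1 hs (ε / 2) (half_pos hε)
  have hnear : ∀ x ∈ t, ∃ y ∈ c, dist x y < ε / 2 := fun x hx => by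
    simpa using hcover (hts hx)
  choose! center hcenter hdist using hnear
  refine (hc.subset (Set.mapsTo_iff_image_subset.1 hcenter)).of_finite_image fun x hx y hy hxy => ?_
  by_contra hne
  have := dist_triangle_right x y (center x)
  linarith [ht hx hy hne, hdist x hx, hxy ▸ hdist y hy]

theorem IsIdempotentElem.exists_characterSpace_apply_eq_one {A : Type*} [NormedCommRing A]
    [NormedAlgebra ℂ A] [CompleteSpace A] {q : A} (hq : IsIdempotentElem q) (hq0 : q ≠ 0) :
    ∃ φ : WeakDual.characterSpace ℂ A, φ q = 1 := by
  refine WeakDual.CharacterSpace.mem_spectrum_iff_exists.1 (spectrum.mem_iff.2 fun hunit => ?_)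
  rw [map_one] at hunit
  exact hq0 ((hunit.mul_right_eq_zero).1 hq.one_sub_mul_self)

theorem exists_isClosed_subalgebra_mul_comm {R X : Type*} [CommRing R] [Ring X] [Algebra R X]
    [TopologicalSpace X] [IsSemitopologicalRing X] [T2Space X] {s : Set X}
    (hs : ∀ a ∈ s, ∀ b ∈ s, a * b = b * a) :
    ∃ A : Subalgebra R X, IsClosed (A : Set X) ∧ (∀ x y : A, x * y = y * x) ∧ s ⊆ A := by
  let _ := (Algebra.adjoin R s).commRingTopologicalClosure
    (Algebra.isMulCommutative_adjoin R hs).is_comm.comm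
  exact ⟨_, Subalgebra.isClosed_topologicalClosure _, mul_comm,
    Algebra.subset_adjoin.trans (Subalgebra.le_topologicalClosure _)⟩

section IsotypicProjection

variable {G : Type*} [Group G] [TopologicalSpace G] [MeasurableSpace G] (μ : Measure G)
  {B : Type*} [NormedRing B] [NormedAlgebra ℂ B] (j : G →ₜ* B)

noncomputable def isotypicProj (χ : G →ₜ* Circle) : B :=
  ∫ g, (((χ g)⁻¹ : Circle) : ℂ) • j g ∂μ

variable [CompactSpace G] [BorelSpace G]

theorem integrable_isotypicProj_integrand [IsFiniteMeasure μ] (χ : G →ₜ* Circle) :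
    Integrable (fun g => (((χ g)⁻¹ : Circle) : ℂ) • j g) μ := by
  refine Continuous.integrable_of_hasCompactSupport ?_ (.of_compactSpace _)
  fun_prop

variable [IsProbabilityMeasure μ]

theorem isotypicProj_mem_closure_convexHull [CompleteSpace B] (χ : G →ₜ* Circle) :
    isotypicProj μ j χ ∈
      closure (convexHull ℝ (Set.range fun p : Circle × G => (p.1 : ℂ) • j p.2)) :=
  (convex_convexHull ℝ _).closure.integral_mem isClosed_closure
    (.of_forall fun g => subset_closure (subset_convexHull ℝ _ ⟨((χ g)⁻¹, g), rfl⟩))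
    (integrable_isotypicProj_integrand μ j χ)

variable [IsTopologicalGroup G] [μ.IsMulLeftInvariant]

theorem mul_isotypicProj (χ : G →ₜ* Circle) (g₀ : G) :
    j g₀ * isotypicProj μ j χ = (χ g₀ : ℂ) • isotypicProj μ j χ := by
  rw [isotypicProj, ← integral_const_mul_of_integrable (integrable_isotypicProj_integrand μ j χ)]
  conv_rhs => rw [← integral_mul_left_eq_self _ g₀, ← integral_smul]
  congr 1 with g
  rw [mul_smul_comm, smul_smul, ← map_mul j, ← Circle.coe_mul, map_mul χ, mul_inv,
    mul_inv_cancel_left]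

variable [CompleteSpace B]

theorem orthogonalIdempotents_isotypicProj : OrthogonalIdempotents (isotypicProj μ j) := by
  classical
  refine OrthogonalIdempotents.iff_mul_eq.2 fun χ ψ => ?_
  rw [isotypicProj, ← integral_mul_const_of_integrable (integrable_isotypicProj_integrand μ j χ)]
  simp_rw [smul_mul_assoc, mul_isotypicProj, smul_smul]
  rw [integral_smul_const, ContinuousMonoidHom.integral_inv_mul_eq_ite]
  split_ifs with h
  · rw [h, one_smul, isotypicProj]
  · rw [zero_smul]

theorem finite_setOf_isotypicProj_ne_zero :
    {χ : G →ₜ* Circle | isotypicProj μ j χ ≠ 0}.Finite := by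
  have hP := orthogonalIdempotents_isotypicProj μ j
  have hinj : {χ : G →ₜ* Circle | isotypicProj μ j χ ≠ 0}.InjOn (isotypicProj μ j) := by
    intro χ hχ ψ _ hχψ
    by_contra hne
    exact hχ ((hP.idem χ).eq.symm.trans ((congrArg (_ * ·) hχψ).trans (hP.ortho hne)))
  refine Set.Finite.of_finite_image ?_ hinj
  refine TotallyBounded.finite_of_pairwise_le_dist (ε := 1)
    (totallyBounded_convexHull.2 (isCompact_range (by fun_prop)).totallyBounded).closure one_pos
    (Set.image_subset_iff.2 fun χ _ => isotypicProj_mem_closure_convexHull μ j χ) ?_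
  rintro _ ⟨χ, hχ, rfl⟩ _ ⟨ψ, -, rfl⟩ hne
  rw [dist_eq_norm]
  exact (hP.idem χ).one_le_norm_sub hχ (hP.ortho fun h => hne (h ▸ rfl))

end IsotypicProjection

def HasFiniteSpectralDecomposition {G B : Type*} [Monoid G] [TopologicalSpace G] [Ring B]
    [Algebra ℂ B] (f : G → B) : Prop :=
  ∃ (n : ℕ) (χ : Fin n → G →ₜ* Circle) (e : Fin n → B), Function.Injective χ ∧ (∀ i, e i ≠ 0) ∧
    CompleteOrthogonalIdempotents e ∧ ∀ g, f g = ∑ i, (χ i g : ℂ) • e i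

theorem HasFiniteSpectralDecomposition.map {G B C : Type*} [Monoid G] [TopologicalSpace G]
    [Ring B] [Algebra ℂ B] [Ring C] [Algebra ℂ C] {f : G → B}
    (hf : HasFiniteSpectralDecomposition f) (φ : B →ₐ[ℂ] C) (hφ : Function.Injective φ) :
    HasFiniteSpectralDecomposition (φ ∘ f) := by
  obtain ⟨n, χ, e, hχ, he, hcomplete, hfe⟩ := hf
  exact ⟨n, χ, φ ∘ e, hχ, fun i => (map_ne_zero_iff φ hφ).2 (he i), hcomplete.map φ.toRingHom,
    fun g => by simp [hfe, map_sum]⟩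

section Commutative

variable {G : Type*} [Group G] [TopologicalSpace G] [IsTopologicalGroup G] [CompactSpace G]
  [MeasurableSpace G] [BorelSpace G] (μ : Measure G) [μ.IsMulLeftInvariant]
  [IsProbabilityMeasure μ] {B : Type*} [NormedCommRing B] [NormedAlgebra ℂ B] [CompleteSpace B]
  (j : G →ₜ* B)

open Classical in
theorem characterSpace_apply_isotypicProj (φ : WeakDual.characterSpace ℂ B)
    (χ : G →ₜ* Circle) :
    φ (isotypicProj μ j χ) = if χ = ((φ : B →ₜ* ℂ).comp j).toCircle then 1 else 0 := by
  rw [← ContinuousMonoidHom.integral_inv_mul_eq_ite μ, isotypicProj,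
    ← WeakDual.CharacterSpace.coe_toCLM,
    ← ContinuousLinearMap.integral_comp_comm _ (integrable_isotypicProj_integrand μ j χ)]
  simp

theorem sum_isotypicProj_eq_one :
    ∑ χ ∈ (finite_setOf_isotypicProj_ne_zero μ j).toFinset, isotypicProj μ j χ = 1 := by
  classical
  set S := (finite_setOf_isotypicProj_ne_zero μ j).toFinset
  by_contra hne
  have hidem := (orthogonalIdempotents_isotypicProj μ j).isIdempotentElem_sum (s := S)
  obtain ⟨φ, hφ⟩ :=
    hidem.one_sub.exists_characterSpace_apply_eq_one (sub_ne_zero.2 (Ne.symm hne))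
  set χ₀ := ((φ : B →ₜ* ℂ).comp j).toCircle with hχ₀_def
  have hφχ₀ : φ (isotypicProj μ j χ₀) = 1 := by
    rw [characterSpace_apply_isotypicProj, if_pos hχ₀_def]
  have hχ₀ : χ₀ ∈ S := (Set.Finite.mem_toFinset _).2 fun h => by simp [h] at hφχ₀
  rw [map_sub, map_one, map_sum] at hφ
  simp only [characterSpace_apply_isotypicProj, ← hχ₀_def] at hφ
  rw [Finset.sum_ite_eq' S, if_pos hχ₀, sub_self] at hφ
  exact zero_ne_one hφ

theorem apply_eq_sum_smul_isotypicProj (g : G) :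
    j g = ∑ χ ∈ (finite_setOf_isotypicProj_ne_zero μ j).toFinset,
      (χ g : ℂ) • isotypicProj μ j χ := by
  rw [← mul_one (j g), ← sum_isotypicProj_eq_one μ j, Finset.mul_sum]
  simp only [mul_isotypicProj]

end Commutative

theorem ContinuousMonoidHom.hasFiniteSpectralDecomposition {G : Type*} [Group G]
    [TopologicalSpace G] [IsTopologicalGroup G] [CompactSpace G] {B : Type*} [NormedCommRing B]
    [NormedAlgebra ℂ B] [CompleteSpace B] (j : G →ₜ* B) :
    HasFiniteSpectralDecomposition j := by
  borelize G
  let μ := Measure.haarMeasure (⊤ : TopologicalSpace.PositiveCompacts G)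
  have : IsProbabilityMeasure μ :=
    ⟨by rw [← TopologicalSpace.PositiveCompacts.coe_top]; exact Measure.haarMeasure_self⟩
  set S := (finite_setOf_isotypicProj_ne_zero μ j).toFinset
  let χ : Fin S.card → G →ₜ* Circle := fun i => S.equivFin.symm i
  have hχ : Function.Injective χ := Subtype.val_injective.comp S.equivFin.symm.injective
  have hreindex (F : (G →ₜ* Circle) → B) : ∑ i, F (χ i) = ∑ ψ ∈ S, F ψ :=
    (S.equivFin.symm.sum_comp fun ψ : S => F ψ).trans (S.sum_coe_sort F)
  refine ⟨S.card, χ, fun i => isotypicProj μ j (χ i), hχ, fun i => ?_,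
    ⟨(orthogonalIdempotents_isotypicProj μ j).embedding ⟨χ, hχ⟩,
      (hreindex _).trans (sum_isotypicProj_eq_one μ j)⟩,
    fun g => (apply_eq_sum_smul_isotypicProj μ j g).trans (hreindex _).symm⟩
  exact (Set.Finite.mem_toFinset _).1 (S.equivFin.symm i).2

theorem finite_spectral_decomposition_banach
    {G : Type*} [CommGroup G] [TopologicalSpace G] [IsTopologicalGroup G] [CompactSpace G]
    {E : Type*} [NormedAddCommGroup E] [NormedSpace ℂ E] [CompleteSpace E]
    (ρ : G →* (E →L[ℂ] E)ˣ) (hρ : Continuous fun g : G => (ρ g : E →L[ℂ] E)) :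
    ∃ (n : ℕ) (χ : Fin n → ContinuousMonoidHom G Circle) (e : Fin n → E →L[ℂ] E),
      Function.Injective χ ∧
      (∀ i, e i ≠ 0) ∧
      (∀ i, IsIdempotentElem (e i)) ∧
      (∀ i j, i ≠ j → e i * e j = 0) ∧
      (∑ i, e i = 1) ∧
      ∀ g : G, (ρ g : E →L[ℂ] E) = ∑ i, ((χ i g : ℂ)) • e i := by
  obtain ⟨A, hA_closed, hA_comm, hρA⟩ :=
    exists_isClosed_subalgebra_mul_comm (R := ℂ) (s := Set.range fun g => (ρ g : E →L[ℂ] E))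
      (by rintro _ ⟨g, rfl⟩ _ ⟨h, rfl⟩; rw [← Units.val_mul, ← map_mul, mul_comm, map_mul,
        Units.val_mul])
  let _ : NormedCommRing A := { A.normedRing with mul_comm := hA_comm }
  have : CompleteSpace A := hA_closed.completeSpace_coe
  let ρA : G →ₜ* A :=
    { toFun g := ⟨ρ g, hρA ⟨g, rfl⟩⟩
      map_one' := by ext1; simp
      map_mul' g h := by ext1; simp
      continuous_toFun := hρ.subtype_mk _ }
  obtain ⟨n, χ, e, hχ, he, hcomplete, hρe⟩ :=
    ρA.hasFiniteSpectralDecomposition.map A.val Subtype.val_injective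
  exact ⟨n, χ, e, hχ, he, hcomplete.idem, fun i j hij => hcomplete.ortho hij, hcomplete.complete,
    hρe⟩
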